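/- MLP-mixer layer bound (Lemma 5.2): let f : 𝒳^M × 𝒳^M → ℝ^{n×n}, let W ∈ ℝ^{n×n} be a fixed matrix, let τ, π, ρ be permutations of the n² entry positions of an n×n matrix, and let c ∈ {0, 1}. Define (L ∘ f)(A, B) := τ( (W · π(f(A, B)))^{⊙2} ) + c · ρ(f(A, B)). Then sep(L ∘ f) ≤ n² · sep(f)² + sep(f). -/
import Mathlib


open scoped BigOperators

/-- Separation rank of a scalar-valued function of two groups of variables. -/
noncomputable def sepRank {𝒳 : Type*} {M : ℕ}
    (y : (Fin M → 𝒳) → (Fin M → 𝒳) → ℝ) : ℕ∞ :=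
  sInf {R : ℕ∞ | ∃ r : ℕ, R = (r : ℕ∞) ∧ ∃ g g' : Fin r → (Fin M → 𝒳) → ℝ,
    ∀ A B, y A B = ∑ i, g i A * g' i B}

/-- Separation rank of a matrix-valued function: maximum over output entries. -/
noncomputable def sepRankM {𝒳 : Type*} {M n m : ℕ}
    (f : (Fin M → 𝒳) → (Fin M → 𝒳) → Matrix (Fin n) (Fin m) ℝ) : ℕ∞ :=
  ⨆ i : Fin n, ⨆ j : Fin m, sepRank (fun A B => f A B i j)

/-- Permute the entries of an `n × m` matrix according to a permutation of positions. -/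
def permEntries {n m : ℕ} (σ : Equiv.Perm (Fin n × Fin m))
    (X : Matrix (Fin n) (Fin m) ℝ) : Matrix (Fin n) (Fin m) ℝ :=
  Matrix.of fun i j => X (σ (i, j)).1 (σ (i, j)).2

/-- A general MLP-mixer layer: permute, apply a weight matrix, square entrywise
(the σ₂ activation), permute again, and optionally add a permuted residual copy. -/
noncomputable def mixLayer {n : ℕ} (W : Matrix (Fin n) (Fin n) ℝ)
    (τ π ρ : Equiv.Perm (Fin n × Fin n)) (c : ℝ)
    (Y : Matrix (Fin n) (Fin n) ℝ) : Matrix (Fin n) (Fin n) ℝ :=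
  permEntries τ (Matrix.of fun i j => ((W * permEntries π Y) i j) ^ 2)
    + c • permEntries ρ Y

lemma sepRank_le_card {𝒳 : Type*} {M : ℕ} {y : (Fin M → 𝒳) → (Fin M → 𝒳) → ℝ}
    {ι : Type*} [Fintype ι] (g g' : ι → (Fin M → 𝒳) → ℝ)
    (h : ∀ A B, y A B = ∑ i, g i A * g' i B) :
    sepRank y ≤ (Fintype.card ι : ℕ∞) := by
  apply sInf_le
  refine ⟨Fintype.card ι, rfl,
    fun i => g ((Fintype.equivFin ι).symm i),
    fun i => g' ((Fintype.equivFin ι).symm i), fun A B => ?_⟩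
  rw [h]
  exact (Equiv.sum_comp (Fintype.equivFin ι).symm
    (fun i => g i A * g' i B)).symm

lemma exists_rep {𝒳 : Type*} {M : ℕ} {y : (Fin M → 𝒳) → (Fin M → 𝒳) → ℝ} {r : ℕ}
    (h : sepRank y ≤ (r : ℕ∞)) :
    ∃ g g' : Fin r → (Fin M → 𝒳) → ℝ, ∀ A B, y A B = ∑ i, g i A * g' i B := by
  have hlt : sepRank y < ((r + 1 : ℕ) : ℕ∞) :=
    lt_of_le_of_lt h (by exact_mod_cast Nat.lt_succ_self r)
  rw [sepRank, sInf_lt_iff] at hlt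
  obtain ⟨a, ⟨r', rfl, g, g', hgg⟩, hlt⟩ := hlt
  have hr' : r' ≤ r := Nat.lt_succ_iff.mp (by exact_mod_cast hlt)
  refine ⟨fun i => if hi : (i : ℕ) < r' then g ⟨i, hi⟩ else 0,
    fun i => if hi : (i : ℕ) < r' then g' ⟨i, hi⟩ else 0, fun A B => ?_⟩
  have key : ∀ i : Fin r,
      (if hi : (i : ℕ) < r' then g ⟨i, hi⟩ else 0) A *
      (if hi : (i : ℕ) < r' then g' ⟨i, hi⟩ else 0) B =
      (fun k : ℕ => if hk : k < r' then g ⟨k, hk⟩ A * g' ⟨k, hk⟩ B else 0) (i : ℕ) := by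
    intro i
    by_cases hi : (i : ℕ) < r' <;> simp [hi]
  rw [hgg]
  calc ∑ i : Fin r', g i A * g' i B
      = ∑ k ∈ Finset.range r',
        (fun k : ℕ => if hk : k < r' then g ⟨k, hk⟩ A * g' ⟨k, hk⟩ B else 0) k := by
        rw [← Fin.sum_univ_eq_sum_range]
        exact Finset.sum_congr rfl fun k _ => by rw [dif_pos k.is_lt]
    _ = ∑ k ∈ Finset.range r,
        (fun k : ℕ => if hk : k < r' then g ⟨k, hk⟩ A * g' ⟨k, hk⟩ B else 0) k := by
        refine Finset.sum_subset (by simpa using Finset.range_subset_range.mpr hr') ?_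
        intro k _ hk
        simp [Finset.mem_range.not.mp hk]
    _ = _ := by
        rw [← Fin.sum_univ_eq_sum_range]
        exact Finset.sum_congr rfl fun i _ => (key i).symm

/-- MLP-mixer layer bound (Lemma 5.2). -/
theorem sepRank_mixLayer {𝒳 : Type*} {M n : ℕ}
    (f : (Fin M → 𝒳) → (Fin M → 𝒳) → Matrix (Fin n) (Fin n) ℝ)
    (W : Matrix (Fin n) (Fin n) ℝ)
    (τ π ρ : Equiv.Perm (Fin n × Fin n)) (c : ℝ) (hc : c = 0 ∨ c = 1) :
    sepRankM (fun A B => mixLayer W τ π ρ c (f A B))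
      ≤ (n : ℕ∞) ^ 2 * sepRankM f ^ 2 + sepRankM f := by
  rcases Nat.eq_zero_or_pos n with hn | hn
  · subst hn
    simp [sepRankM]
  rcases eq_or_ne (sepRankM f) ⊤ with hR | hR
  · rw [hR]
    simp
  obtain ⟨r, hr0⟩ := WithTop.ne_top_iff_exists.mp hR
  have hr : sepRankM f = (r : ℕ∞) := by exact_mod_cast hr0.symm
  rw [hr]
  -- extract representations for each entry of f
  have hent : ∀ p : Fin n × Fin n,
      ∃ g g' : Fin r → (Fin M → 𝒳) → ℝ,
        ∀ A B, f A B p.1 p.2 = ∑ i, g i A * g' i B := by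
    intro p
    apply exists_rep
    rw [← hr]
    exact le_iSup_of_le p.1 (le_iSup_of_le p.2 le_rfl)
  choose g g' hgg using hent
  rw [sepRankM]
  refine iSup_le fun i => iSup_le fun j => ?_
  set a := (τ (i, j)).1 with ha
  set b := (τ (i, j)).2 with hb
  set p := ρ (i, j) with hp
  -- representation of the (i,j) entry of the layer output
  set ι := ((Fin n × Fin n × Fin r × Fin r) ⊕ Fin r) with hι
  have hrep : ∀ A B, mixLayer W τ π ρ c (f A B) i j =
      ∑ x : ι,
        (Sum.elim
          (fun q : Fin n × Fin n × Fin r × Fin r =>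
            W a q.1 * W a q.2.1 * g (π (q.1, b)) q.2.2.1 A * g (π (q.2.1, b)) q.2.2.2 A)
          (fun s : Fin r => c * g p s A) x) *
        (Sum.elim
          (fun q : Fin n × Fin n × Fin r × Fin r =>
            g' (π (q.1, b)) q.2.2.1 B * g' (π (q.2.1, b)) q.2.2.2 B)
          (fun s : Fin r => g' p s B) x) := by
    intro A B
    rw [Fintype.sum_sum_type]
    simp only [Sum.elim_inl, Sum.elim_inr]
    have hmix : mixLayer W τ π ρ c (f A B) i j =
        (∑ k, W a k * f A B (π (k, b)).1 (π (k, b)).2) ^ 2 +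
        c * f A B p.1 p.2 := by
      simp [mixLayer, permEntries, Matrix.mul_apply, ← ha, ← hb, ← hp]
    rw [hmix]
    have h1 : (∑ k, W a k * f A B (π (k, b)).1 (π (k, b)).2) ^ 2 =
        ∑ q : Fin n × Fin n × Fin r × Fin r,
          (W a q.1 * W a q.2.1 * g (π (q.1, b)) q.2.2.1 A * g (π (q.2.1, b)) q.2.2.2 A) *
          (g' (π (q.1, b)) q.2.2.1 B * g' (π (q.2.1, b)) q.2.2.2 B) := by
      rw [sq, Finset.sum_mul_sum]
      simp only [Fintype.sum_prod_type]
      refine Finset.sum_congr rfl fun k _ => Finset.sum_congr rfl fun l _ => ?_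
      rw [hgg (π (k, b)), hgg (π (l, b)), Finset.mul_sum, Finset.mul_sum,
        Finset.sum_mul_sum]
      refine Finset.sum_congr rfl fun s _ => Finset.sum_congr rfl fun t _ => ?_
      ring
    have h2 : c * f A B p.1 p.2 = ∑ s : Fin r, (c * g p s A) * g' p s B := by
      rw [hgg p, Finset.mul_sum]
      exact Finset.sum_congr rfl fun s _ => by ring
    rw [h1, h2]
  have hcard : (Fintype.card ι : ℕ∞) ≤ (n : ℕ∞) ^ 2 * (r : ℕ∞) ^ 2 + (r : ℕ∞) := by
    have : Fintype.card ι = n * (n * (r * r)) + r := by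
      simp [hι, Fintype.card_sum, Fintype.card_prod]
    rw [this]
    push_cast
    ring_nf
    exact le_rfl
  exact le_trans (sepRank_le_card _ _ hrep) hcard
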